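/- arXiv:1504.04201 — 2 statements merged into one kernel-verified Lean document; each statement's English description precedes it below -/
import Mathlib

section
/- Let f = x_0^{a_0} x_1^{a_1} ⋯ x_{n+1}^{a_{n+1}} be a monomial with f ∈ I_{B_n}^{(m)}, and set t = min{a_0, a_{n+1}}. Then the monomial g = x_0^{t} x_1^{a_1} ⋯ x_n^{a_n} x_{n+1}^{t} also belongs to I_{B_n}^{(m)}. -/
/-!
A monomial `∏ x_j ^ a_j` lies in `⟨x_j : j ∈ T⟩ ^ m` exactly when `m ≤ ∑_{j ∈ T} a_j`. No arc
contains the apexes `0` and `n + 1`, so `f ∈ I_{B_n}^{(m)}` says that for every arc `S`,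
`m ≤ a_0 + a(S)` and `m ≤ a_{n+1} + a(S)`. Together these say `m ≤ min(a_0, a_{n+1}) + a(S)`,
which is both conditions for `g`, since `g` agrees with `f` off the apexes.
-/

open MvPolynomial
open Fin.NatCast

/-- The subtree (arc) of `n-2` consecutive cycle vertices of the `n`-cycle `Q_n`
(on vertices `1,…,n` inside `Fin (n+2)`), starting at vertex `i+1`, for `i = 0,…,n-1`.
The family `arcT n i`, `i < n`, is exactly the family `𝒯` of subtrees of `Q_n`
with `n-2` vertices. -/
def arcT (n i : ℕ) : Finset (Fin (n + 2)) :=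
  (Finset.range (n - 2)).image fun t => (((i + t) % n + 1 : ℕ) : Fin (n + 2))

/-- The monomial prime ideal `⟨x_v⟩ + ⟨x_j : j ∈ S⟩`. -/
noncomputable def apexIdeal (K : Type*) [Field K] (n : ℕ) (v : Fin (n + 2))
    (S : Finset (Fin (n + 2))) : Ideal (MvPolynomial (Fin (n + 2)) K) :=
  Ideal.span (insert (X v) (X '' (S : Set (Fin (n+2))) : Set (MvPolynomial (Fin (n + 2)) K)))

/-- The `m`-th symbolic power `I_{B_n}^{(m)} = ⋂_{S ∈ 𝒯} (I_{[0,S]}^m ∩ I_{[n+1,S]}^m)`. -/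
noncomputable def symbPow (K : Type*) [Field K] (n m : ℕ) : Ideal (MvPolynomial (Fin (n + 2)) K) :=
  ⨅ i ∈ Finset.range n,
    apexIdeal K n 0 (arcT n i) ^ m ⊓ apexIdeal K n ((n + 1 : ℕ) : Fin (n + 2)) (arcT n i) ^ m

/-- The monomial `x_0^{a_0} x_1^{a_1} ⋯ x_{n+1}^{a_{n+1}}`. -/
noncomputable def monom (K : Type*) [Field K] (n : ℕ) (a : Fin (n + 2) → ℕ) :
    MvPolynomial (Fin (n + 2)) K :=
  ∏ i, X i ^ a i

/-- `α_{n,m}`: the least total degree of a monomial lying in `I_{B_n}^{(m)}`. -/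
noncomputable def alphaSymb (K : Type*) [Field K] (n m : ℕ) : ℕ :=
  sInf {d | ∃ a : Fin (n + 2) → ℕ, (∑ i, a i) = d ∧ monom K n a ∈ symbPow K n m}

/-- The Stanley–Reisner ideal `I_{B_n}` of the bipyramid `B_n`, presented by its
quadratic generators: `x_0 x_{n+1}` together with `x_i x_j` for non-adjacent
vertices `i, j` of the cycle `Q_n`. -/
noncomputable def bipyrIdeal (K : Type*) [Field K] (n : ℕ) : Ideal (MvPolynomial (Fin (n + 2)) K) :=
  Ideal.span ({X (0 : Fin (n + 2)) * X ((n + 1 : ℕ) : Fin (n + 2))} ∪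
    {p | ∃ i j : ℕ, 1 ≤ i ∧ i ≤ n ∧ 1 ≤ j ∧ j ≤ n ∧ i ≠ j ∧
      j ≠ i % n + 1 ∧ i ≠ j % n + 1 ∧
      p = X ((i : ℕ) : Fin (n + 2)) * X ((j : ℕ) : Fin (n + 2))})


namespace MvPolynomial

variable {σ R : Type*} [Fintype σ] [CommRing R]

theorem prod_X_pow_mem_span_X_image_pow {T : Finset σ} {a : σ → ℕ} {m : ℕ}
    (hm : m ≤ ∑ j ∈ T, a j) :
    ∏ i, (X i : MvPolynomial σ R) ^ a i ∈ Ideal.span (X '' (T : Set σ)) ^ m := by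
  classical
  have hT : ∏ j ∈ T, (X j : MvPolynomial σ R) ^ a j ∈
      Ideal.span (X '' (T : Set σ)) ^ ∑ j ∈ T, a j := by
    rw [← Finset.prod_pow_eq_pow_sum]
    exact Ideal.prod_mem_prod fun j hj =>
      Ideal.pow_mem_pow (Ideal.subset_span (Set.mem_image_of_mem X hj)) _
  rw [← Finset.prod_sdiff (Finset.subset_univ T)]
  exact Ideal.mul_mem_left _ _ (Ideal.pow_le_pow_right hm hT)

theorem le_sum_of_prod_X_pow_mem_span_X_image_pow [Nontrivial R] {T : Finset σ} {a : σ → ℕ}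
    {m : ℕ} (h : ∏ i, (X i : MvPolynomial σ R) ^ a i ∈ Ideal.span (X '' (T : Set σ)) ^ m) :
    m ≤ ∑ j ∈ T, a j := by
  classical
  -- Sending the variables in `T` to `X` and the others to `1` turns the monomial into
  -- `X ^ ∑ j ∈ T, a j` and the ideal into a subideal of `(X) ^ m`.
  let φ : MvPolynomial σ R →ₐ[R] Polynomial R :=
    aeval fun j => if j ∈ T then Polynomial.X else 1
  have hspan : (Ideal.span (X '' (T : Set σ))).map φ ≤ Ideal.span {Polynomial.X} := by
    rw [Ideal.map_span, Ideal.span_le]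
    rintro _ ⟨_, ⟨j, hj, rfl⟩, rfl⟩
    simp [φ, Finset.mem_coe.1 hj]
  have hφ : φ (∏ i, X i ^ a i) = Polynomial.X ^ ∑ j ∈ T, a j := by
    simp [φ, ← Finset.prod_pow_eq_pow_sum, Finset.prod_ite_mem]
  have hdvd : (Polynomial.X : Polynomial R) ^ m ∣ Polynomial.X ^ ∑ j ∈ T, a j := by
    rw [← Ideal.mem_span_singleton, ← Ideal.span_singleton_pow, ← hφ]
    refine Ideal.pow_right_mono hspan m ?_
    rw [← Ideal.map_pow]
    exact Ideal.mem_map_of_mem _ h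
  by_contra! hlt
  simpa using Polynomial.X_pow_dvd_iff.1 hdvd _ hlt

theorem prod_X_pow_mem_span_X_image_pow_iff [Nontrivial R] {T : Finset σ} {a : σ → ℕ} {m : ℕ} :
    ∏ i, (X i : MvPolynomial σ R) ^ a i ∈ Ideal.span (X '' (T : Set σ)) ^ m ↔
      m ≤ ∑ j ∈ T, a j :=
  ⟨le_sum_of_prod_X_pow_mem_span_X_image_pow, prod_X_pow_mem_span_X_image_pow⟩

end MvPolynomial

theorem apexIdeal_eq_span_X_image (K : Type*) [Field K] (n : ℕ) (v : Fin (n + 2))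
    (S : Finset (Fin (n + 2))) :
    apexIdeal K n v S = Ideal.span (X '' ((insert v S : Finset (Fin (n + 2))) : Set _)) := by
  rw [apexIdeal, Finset.coe_insert, Set.image_insert_eq]

theorem monom_mem_apexIdeal_pow_iff {K : Type*} [Field K] {n m : ℕ} {v : Fin (n + 2)}
    {S : Finset (Fin (n + 2))} (hv : v ∉ S) (a : Fin (n + 2) → ℕ) :
    monom K n a ∈ apexIdeal K n v S ^ m ↔ m ≤ a v + ∑ j ∈ S, a j := by
  rw [monom, apexIdeal_eq_span_X_image, prod_X_pow_mem_span_X_image_pow_iff,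
    Finset.sum_insert hv]

theorem val_mem_Icc_of_mem_arcT {n i : ℕ} {j : Fin (n + 2)} (hj : j ∈ arcT n i) :
    j.val ∈ Finset.Icc 1 n := by
  obtain ⟨t, ht, rfl⟩ := Finset.mem_image.1 hj
  have hlt : (i + t) % n < n := Nat.mod_lt _ (by grind)
  rw [Fin.val_natCast, Nat.mod_eq_of_lt (by omega), Finset.mem_Icc]
  omega

theorem zero_notMem_arcT (n i : ℕ) : (0 : Fin (n + 2)) ∉ arcT n i := fun h => by
  simpa using val_mem_Icc_of_mem_arcT h

theorem last_notMem_arcT (n i : ℕ) : ((n + 1 : ℕ) : Fin (n + 2)) ∉ arcT n i := fun h => by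
  have := Finset.mem_Icc.1 (val_mem_Icc_of_mem_arcT h)
  rw [Fin.val_natCast, Nat.mod_eq_of_lt (by omega)] at this
  omega

theorem monom_mem_symbPow_iff {K : Type*} [Field K] {n m : ℕ} (a : Fin (n + 2) → ℕ) :
    monom K n a ∈ symbPow K n m ↔ ∀ i < n,
      m ≤ a 0 + ∑ j ∈ arcT n i, a j ∧
      m ≤ a ((n + 1 : ℕ) : Fin (n + 2)) + ∑ j ∈ arcT n i, a j := by
  simp only [symbPow, Ideal.mem_iInf, Ideal.mem_inf, Finset.mem_range,
    monom_mem_apexIdeal_pow_iff (zero_notMem_arcT _ _),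
    monom_mem_apexIdeal_pow_iff (last_notMem_arcT _ _)]

theorem symmetrized_monom_mem_symbPow_general (K : Type*) [Field K] (n : ℕ) (m : ℕ)
    (a : Fin (n + 2) → ℕ) (hf : monom K n a ∈ symbPow K n m) :
    monom K n (fun j => if j = 0 ∨ j = ((n + 1 : ℕ) : Fin (n + 2)) then
        min (a 0) (a ((n + 1 : ℕ) : Fin (n + 2))) else a j) ∈ symbPow K n m := by
  rw [monom_mem_symbPow_iff] at hf ⊢
  intro i hi
  have harc : ∑ j ∈ arcT n i, (if j = 0 ∨ j = ((n + 1 : ℕ) : Fin (n + 2)) then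
      min (a 0) (a ((n + 1 : ℕ) : Fin (n + 2))) else a j) = ∑ j ∈ arcT n i, a j := by
    refine Finset.sum_congr rfl fun j hj => if_neg ?_
    rintro (rfl | rfl)
    exacts [zero_notMem_arcT n i hj, last_notMem_arcT n i hj]
  simp only [harc, true_or, or_true, if_true]
  have := hf i hi
  omega

/-- If `f = x_0^{a_0} x_1^{a_1} ⋯ x_{n+1}^{a_{n+1}} ∈ I_{B_n}^{(m)}` and
`t = min {a_0, a_{n+1}}`, then `g = x_0^t x_1^{a_1} ⋯ x_n^{a_n} x_{n+1}^t ∈ I_{B_n}^{(m)}`. -/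
theorem symmetrized_monom_mem_symbPow (K : Type*) [Field K] (n : ℕ) (hn : 3 ≤ n) (m : ℕ)
    (a : Fin (n + 2) → ℕ) (hf : monom K n a ∈ symbPow K n m) :
    monom K n (fun j => if j = 0 ∨ j = ((n + 1 : ℕ) : Fin (n + 2)) then
        min (a 0) (a ((n + 1 : ℕ) : Fin (n + 2))) else a j) ∈ symbPow K n m :=
  symmetrized_monom_mem_symbPow_general K n m a hf
end

section
/- Let k ≥ 3 and n = 2k−1. No monomial of total degree strictly less than 2k−1 belongs to I_{B_{2k−1}}^{(2k−3)}. -/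
open MvPolynomial
open Fin.NatCast

/-!
Specialising `x_j ↦ t` for `j ∈ T` and `x_j ↦ 1` otherwise shows that a monomial in
`⟨x_j : j ∈ T⟩ ^ m` has total degree at least `m` in the variables of `T`. Hence if `x^a` lies in
`I_{B_n}^{(m)}`, then `2 m ≤ a_0 + a_{n+1} + 2 a(S)` for every arc `S`. Summing over the `n` arcs,
each cycle vertex lying in `n - 2` of them, gives
`2 m n ≤ n (a_0 + a_{n+1}) + 2 (n - 2) a(Q_n) ≤ 2 (n - 2) deg x^a` as soon as `n ≥ 4`.
For `m = n - 2` this forces `deg x^a ≥ n`.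
-/

open Finset

section MonomialIdeal

variable {σ R : Type*} [Fintype σ] [CommRing R] [Nontrivial R]

lemma le_sum_of_prod_X_pow_mem_span_X_pow {T : Finset σ} {a : σ → ℕ} {m : ℕ}
    (h : ∏ i, X i ^ a i ∈ Ideal.span (X '' (T : Set σ) : Set (MvPolynomial σ R)) ^ m) :
    m ≤ ∑ j ∈ T, a j := by
  classical
  let φ : MvPolynomial σ R →ₐ[R] Polynomial R :=
    aeval fun j => if j ∈ T then Polynomial.X else 1
  have hspan : Ideal.map φ (Ideal.span (X '' (T : Set σ))) ≤ Ideal.span {Polynomial.X} := by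
    rw [Ideal.map_span, Ideal.span_le]
    rintro _ ⟨_, ⟨j, hj, rfl⟩, rfl⟩
    simp [φ, mem_coe.mp hj]
  have himage : φ (∏ i, X i ^ a i) = Polynomial.X ^ ∑ j ∈ T, a j := by
    simp [φ, map_prod, ite_pow, prod_ite_mem, prod_pow_eq_pow_sum]
  have hdvd : (Polynomial.X : Polynomial R) ^ m ∣ Polynomial.X ^ ∑ j ∈ T, a j := by
    rw [← Ideal.mem_span_singleton, ← Ideal.span_singleton_pow, ← himage]
    exact Ideal.pow_right_mono hspan m (Ideal.map_pow φ _ m ▸ Ideal.mem_map_of_mem φ h)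
  by_contra! hlt
  simpa using Polynomial.X_pow_dvd_iff.mp hdvd _ hlt

end MonomialIdeal

lemma sum_range_comp_add_mod {M : Type*} [AddCancelCommMonoid M] (g : ℕ → M) (n t : ℕ) :
    ∑ i ∈ range n, g ((i + t) % n) = ∑ i ∈ range n, g i := by
  induction t with
  | zero => exact sum_congr rfl fun i hi => by rw [add_zero, Nat.mod_eq_of_lt (mem_range.mp hi)]
  | succ t ih =>
    have hshift := (sum_range_succ' (fun i => g ((i + t) % n)) n).symm.trans
      (sum_range_succ (fun i => g ((i + t) % n)) n)
    rw [zero_add, Nat.add_mod_left] at hshift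
    rw [← ih, ← add_right_cancel hshift]
    simp only [add_assoc, add_comm 1 t]

section Bipyramid

variable {K : Type*} [Field K] {n : ℕ}

lemma apexIdeal_eq_span (v : Fin (n + 2)) (S : Finset (Fin (n + 2))) :
    apexIdeal K n v S = Ideal.span (X '' ↑(insert v S)) := by
  rw [apexIdeal, coe_insert, Set.image_insert_eq]

lemma le_add_sum_of_monom_mem_apexIdeal_pow {m : ℕ} {v : Fin (n + 2)} {S : Finset (Fin (n + 2))}
    {a : Fin (n + 2) → ℕ} (h : monom K n a ∈ apexIdeal K n v S ^ m) :
    m ≤ a v + ∑ j ∈ S, a j := by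
  rw [apexIdeal_eq_span] at h
  have hle := le_sum_of_prod_X_pow_mem_span_X_pow h
  by_cases hv : v ∈ S
  · rw [insert_eq_of_mem hv] at hle
    omega
  · rwa [sum_insert hv] at hle

lemma sum_arcT (i : ℕ) (a : Fin (n + 2) → ℕ) :
    ∑ j ∈ arcT n i, a j = ∑ t ∈ range (n - 2), a (((i + t) % n + 1 : ℕ) : Fin (n + 2)) := by
  refine sum_image fun t₁ ht₁ t₂ ht₂ he => ?_
  simp only [coe_range, Set.mem_Iio] at ht₁ ht₂
  have hlt : ∀ t, (i + t) % n < n := fun t => Nat.mod_lt _ (by omega)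
  have hval := congrArg Fin.val he
  rw [Fin.val_cast_of_lt (by grind [hlt t₁]), Fin.val_cast_of_lt (by grind [hlt t₂])] at hval
  have hmod : t₁ ≡ t₂ [MOD n] := Nat.ModEq.add_left_cancel' i (Nat.add_right_cancel hval)
  rwa [Nat.ModEq, Nat.mod_eq_of_lt (by omega), Nat.mod_eq_of_lt (by omega)] at hmod

lemma sum_univ_eq_apex_add_sum_cycle (a : Fin (n + 2) → ℕ) :
    ∑ i, a i =
      a 0 + a ((n + 1 : ℕ) : Fin (n + 2)) + ∑ j ∈ range n, a ((j + 1 : ℕ) : Fin (n + 2)) := by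
  have hsucc : ∀ i : Fin n, i.castSucc.succ = ((i + 1 : ℕ) : Fin (n + 2)) := fun i =>
    Fin.ext (by rw [Fin.val_cast_of_lt (by omega)]; simp)
  rw [Fin.sum_univ_succ, Fin.sum_univ_castSucc, ← Fin.sum_univ_eq_sum_range, Fin.natCast_eq_last]
  simp only [hsucc]
  ac_rfl

theorem mul_le_sub_two_mul_sum_of_monom_mem_symbPow {m : ℕ} (hn : 4 ≤ n)
    {a : Fin (n + 2) → ℕ} (h : monom K n a ∈ symbPow K n m) :
    m * n ≤ (n - 2) * ∑ i, a i := by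
  set c := a 0 + a ((n + 1 : ℕ) : Fin (n + 2))
  set g : ℕ → ℕ := fun j => a ((j + 1 : ℕ) : Fin (n + 2))
  have harc : ∀ i ∈ range n, 2 * m ≤ c + 2 * ∑ t ∈ range (n - 2), g ((i + t) % n) := by
    intro i hi
    simp only [symbPow, Submodule.mem_iInf, Submodule.mem_inf] at h
    have h₀ := le_add_sum_of_monom_mem_apexIdeal_pow (h i hi).1
    have h₁ := le_add_sum_of_monom_mem_apexIdeal_pow (h i hi).2
    have harc_sum : ∑ j ∈ arcT n i, a j = ∑ t ∈ range (n - 2), g ((i + t) % n) := sum_arcT i a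
    omega
  have hsum : 2 * m * n ≤ n * c + 2 * ((n - 2) * ∑ j ∈ range n, g j) :=
    calc 2 * m * n = ∑ i ∈ range n, 2 * m := by rw [sum_const, card_range, smul_eq_mul, mul_comm]
      _ ≤ ∑ i ∈ range n, (c + 2 * ∑ t ∈ range (n - 2), g ((i + t) % n)) := sum_le_sum harc
      _ = n * c + 2 * ∑ t ∈ range (n - 2), ∑ i ∈ range n, g ((i + t) % n) := by
        rw [sum_add_distrib, sum_const, card_range, smul_eq_mul, ← mul_sum, sum_comm]
      _ = n * c + 2 * ((n - 2) * ∑ j ∈ range n, g j) := by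
        simp only [sum_range_comp_add_mod, sum_const, card_range, smul_eq_mul]
  have hdeg : ∑ i, a i = c + ∑ j ∈ range n, g j := sum_univ_eq_apex_add_sum_cycle a
  rw [hdeg]
  obtain ⟨p, rfl⟩ : ∃ p, n = p + 4 := ⟨n - 4, by omega⟩
  simp only [show p + 4 - 2 = p + 2 by omega] at hsum ⊢
  nlinarith

end Bipyramid

/-- For `k ≥ 3` and `n = 2k - 1`, no monomial of total degree strictly less than
`2k - 1` belongs to `I_{B_{2k-1}}^{(2k-3)}`. -/
theorem no_low_degree_monomial_odd (K : Type*) [Field K] (k : ℕ) (hk : 3 ≤ k)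
    (a : Fin (2 * k - 1 + 2) → ℕ) (hdeg : (∑ i, a i) < 2 * k - 1) :
    monom K (2 * k - 1) a ∉ symbPow K (2 * k - 1) (2 * k - 3) := by
  intro hmem
  have hbound := mul_le_sub_two_mul_sum_of_monom_mem_symbPow (by omega) hmem
  rw [show 2 * k - 1 - 2 = 2 * k - 3 by omega] at hbound
  have hdeg_ge := Nat.le_of_mul_le_mul_left hbound (by omega : 0 < 2 * k - 3)
  omega
end
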